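/- arXiv:2009.00176 — 4 statements merged into one kernel-verified Lean document; each statement's English description precedes it below -/
import Mathlib

section
/- (Faithfulness) For any formula A of the language L of intuitionistic predicate logic with free variables x₁, …, xₙ: if A is provable in IQC, then ∀x₁ ⋯ ∀xₙ A^t is provable in Q∘S4.t. -/
/-! ## Propositional intuitionistic formulas and IPC -/

inductive PropForm : Type
  | var : ℕ → PropForm
  | falsum : PropForm
  | and : PropForm → PropForm → PropForm
  | or : PropForm → PropForm → PropForm
  | impl : PropForm → PropForm → PropForm

/-- Hilbert-style intuitionistic propositional calculus. -/
inductive IPC : PropForm → Prop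
  | ax1 (A B : PropForm) : IPC (A.impl (B.impl A))
  | ax2 (A B C : PropForm) : IPC ((A.impl (B.impl C)).impl ((A.impl B).impl (A.impl C)))
  | andE1 (A B : PropForm) : IPC ((A.and B).impl A)
  | andE2 (A B : PropForm) : IPC ((A.and B).impl B)
  | andI (A B : PropForm) : IPC (A.impl (B.impl (A.and B)))
  | orI1 (A B : PropForm) : IPC (A.impl (A.or B))
  | orI2 (A B : PropForm) : IPC (B.impl (A.or B))
  | orE (A B C : PropForm) : IPC ((A.impl C).impl ((B.impl C).impl ((A.or B).impl C)))
  | exfalso (A : PropForm) : IPC (PropForm.falsum.impl A)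
  | mp (A B : PropForm) : IPC (A.impl B) → IPC A → IPC B

/-! ## Bimodal propositional formulas and S4.t -/

inductive BForm : Type
  | var : ℕ → BForm
  | falsum : BForm
  | impl : BForm → BForm → BForm
  | boxF : BForm → BForm
  | boxP : BForm → BForm

def BForm.neg (A : BForm) : BForm := A.impl .falsum
def BForm.diaF (A : BForm) : BForm := (A.neg.boxF).neg
def BForm.diaP (A : BForm) : BForm := (A.neg.boxP).neg

/-- The tense propositional logic S4.t: classical propositional logic, S4 axioms
for both `boxF` and `boxP`, the two tense axioms, MP and both necessitations. -/
inductive S4t : BForm → Prop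
  | ax1 (A B : BForm) : S4t (A.impl (B.impl A))
  | ax2 (A B C : BForm) : S4t ((A.impl (B.impl C)).impl ((A.impl B).impl (A.impl C)))
  | ax3 (A B : BForm) : S4t (((B.neg).impl (A.neg)).impl (A.impl B))
  | kF (A B : BForm) : S4t ((A.impl B).boxF.impl (A.boxF.impl B.boxF))
  | tF (A : BForm) : S4t (A.boxF.impl A)
  | fourF (A : BForm) : S4t (A.boxF.impl A.boxF.boxF)
  | kP (A B : BForm) : S4t ((A.impl B).boxP.impl (A.boxP.impl B.boxP))
  | tP (A : BForm) : S4t (A.boxP.impl A)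
  | fourP (A : BForm) : S4t (A.boxP.impl A.boxP.boxP)
  | tense1 (A : BForm) : S4t (A.impl A.diaF.boxP)
  | tense2 (A : BForm) : S4t (A.impl A.diaP.boxF)
  | mp (A B : BForm) : S4t (A.impl B) → S4t A → S4t B
  | necF (A : BForm) : S4t A → S4t A.boxF
  | necP (A : BForm) : S4t A → S4t A.boxP

/-! ## Predicate tense formulas (the language L_T) -/

/-- Formulas of the bimodal predicate language `L_T`.  The classical basis means
that `⊥, →, ∀, □F, □P` are primitive; the remaining connectives are the usual
classical abbreviations, defined below. -/
inductive TForm : Type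
  | falsum : TForm
  | atom : ℕ → List ℕ → TForm
  | impl : TForm → TForm → TForm
  | all : ℕ → TForm → TForm
  | boxF : TForm → TForm
  | boxP : TForm → TForm

def TForm.neg (A : TForm) : TForm := A.impl .falsum
def TForm.and (A B : TForm) : TForm := (A.impl B.neg).neg
def TForm.or (A B : TForm) : TForm := (A.neg).impl B
def TForm.iff (A B : TForm) : TForm := (A.impl B).and (B.impl A)
def TForm.ex (x : ℕ) (A : TForm) : TForm := (TForm.all x A.neg).neg
def TForm.diaF (A : TForm) : TForm := A.neg.boxF.neg
def TForm.diaP (A : TForm) : TForm := A.neg.boxP.neg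

def TForm.freeVars : TForm → Finset ℕ
  | .falsum => ∅
  | .atom _ args => args.toFinset
  | .impl A B => A.freeVars ∪ B.freeVars
  | .all x A => A.freeVars.erase x
  | .boxF A => A.freeVars
  | .boxP A => A.freeVars

/-- Replace every free occurrence of the variable `x` by `y`. -/
def TForm.subst (x y : ℕ) : TForm → TForm
  | .falsum => .falsum
  | .atom p args => .atom p (args.map fun v => if v = x then y else v)
  | .impl A B => .impl (A.subst x y) (B.subst x y)
  | .all z A => if z = x then .all z A else .all z (A.subst x y)
  | .boxF A => .boxF (A.subst x y)
  | .boxP A => .boxP (A.subst x y)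

/-- `y` is substitutable for `x`: no free occurrence of `x` lies in the scope of
a quantifier binding `y`. -/
def TForm.substOK (x y : ℕ) : TForm → Prop
  | .falsum => True
  | .atom _ _ => True
  | .impl A B => A.substOK x y ∧ B.substOK x y
  | .all z A => z = x ∨ ((z = y → x ∉ A.freeVars) ∧ A.substOK x y)
  | .boxF A => A.substOK x y
  | .boxP A => A.substOK x y

/-- Substitution of `L_T`-formulas for the propositional letters of a bimodal
propositional formula. -/
def BForm.tsubst (s : ℕ → TForm) : BForm → TForm
  | .var n => s n
  | .falsum => .falsum
  | .impl A B => .impl (A.tsubst s) (B.tsubst s)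
  | .boxF A => .boxF (A.tsubst s)
  | .boxP A => .boxP (A.tsubst s)

/-! ## The predicate tense logic Q∘S4.t -/

inductive QoS4t : TForm → Prop
  /-- all substitution instances of theorems of S4.t -/
  | s4t (φ : BForm) (s : ℕ → TForm) : S4t φ → QoS4t (φ.tsubst s)
  /-- (UI°)  ∀y(∀x A → A(y/x)) -/
  | ui (x y : ℕ) (A : TForm) (hok : A.substOK x y) :
      QoS4t (.all y ((TForm.all x A).impl (A.subst x y)))
  /-- ∀x(A → B) → (∀x A → ∀x B) -/
  | distrib (x : ℕ) (A B : TForm) :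
      QoS4t ((TForm.all x (A.impl B)).impl ((TForm.all x A).impl (TForm.all x B)))
  /-- ∀x∀y A ↔ ∀y∀x A -/
  | comm (x y : ℕ) (A : TForm) :
      QoS4t ((TForm.all x (TForm.all y A)).iff (TForm.all y (TForm.all x A)))
  /-- A → ∀x A, x not free in A -/
  | vac (x : ℕ) (A : TForm) (h : x ∉ A.freeVars) : QoS4t (A.impl (.all x A))
  /-- (NID)  ∀x A → A, x not free in A -/
  | nid (x : ℕ) (A : TForm) (h : x ∉ A.freeVars) : QoS4t ((TForm.all x A).impl A)
  /-- (CBF_F)  □F ∀x A → ∀x □F A -/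
  | cbfF (x : ℕ) (A : TForm) : QoS4t ((TForm.all x A).boxF.impl (TForm.all x A.boxF))
  | mp (A B : TForm) : QoS4t (A.impl B) → QoS4t A → QoS4t B
  | gen (x : ℕ) (A : TForm) : QoS4t A → QoS4t (.all x A)
  | necF (A : TForm) : QoS4t A → QoS4t A.boxF
  | necP (A : TForm) : QoS4t A → QoS4t A.boxP

/-! ## The language L of intuitionistic predicate logic and IQC -/

inductive IForm : Type
  | falsum : IForm
  | atom : ℕ → List ℕ → IForm
  | and : IForm → IForm → IForm
  | or : IForm → IForm → IForm
  | impl : IForm → IForm → IForm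
  | all : ℕ → IForm → IForm
  | ex : ℕ → IForm → IForm

def IForm.freeVars : IForm → Finset ℕ
  | .falsum => ∅
  | .atom _ args => args.toFinset
  | .and A B => A.freeVars ∪ B.freeVars
  | .or A B => A.freeVars ∪ B.freeVars
  | .impl A B => A.freeVars ∪ B.freeVars
  | .all x A => A.freeVars.erase x
  | .ex x A => A.freeVars.erase x

def IForm.subst (x y : ℕ) : IForm → IForm
  | .falsum => .falsum
  | .atom p args => .atom p (args.map fun v => if v = x then y else v)
  | .and A B => .and (A.subst x y) (B.subst x y)
  | .or A B => .or (A.subst x y) (B.subst x y)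
  | .impl A B => .impl (A.subst x y) (B.subst x y)
  | .all z A => if z = x then .all z A else .all z (A.subst x y)
  | .ex z A => if z = x then .ex z A else .ex z (A.subst x y)

def IForm.substOK (x y : ℕ) : IForm → Prop
  | .falsum => True
  | .atom _ _ => True
  | .and A B => A.substOK x y ∧ B.substOK x y
  | .or A B => A.substOK x y ∧ B.substOK x y
  | .impl A B => A.substOK x y ∧ B.substOK x y
  | .all z A => z = x ∨ ((z = y → x ∉ A.freeVars) ∧ A.substOK x y)
  | .ex z A => z = x ∨ ((z = y → x ∉ A.freeVars) ∧ A.substOK x y)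

/-- Substitution of `L`-formulas for the propositional letters of an
intuitionistic propositional formula. -/
def PropForm.isubst (s : ℕ → IForm) : PropForm → IForm
  | .var n => s n
  | .falsum => .falsum
  | .and A B => .and (A.isubst s) (B.isubst s)
  | .or A B => .or (A.isubst s) (B.isubst s)
  | .impl A B => .impl (A.isubst s) (B.isubst s)

/-- The intuitionistic predicate calculus IQC. -/
inductive IQC : IForm → Prop
  /-- all substitution instances of theorems of IPC -/
  | ipc (φ : PropForm) (s : ℕ → IForm) : IPC φ → IQC (φ.isubst s)
  /-- (UI)  ∀x A → A(y/x) -/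
  | ui (x y : ℕ) (A : IForm) (hok : A.substOK x y) :
      IQC ((IForm.all x A).impl (A.subst x y))
  /-- A(y/x) → ∃x A -/
  | exI (x y : ℕ) (A : IForm) (hok : A.substOK x y) :
      IQC ((A.subst x y).impl (IForm.ex x A))
  /-- ∀x(A → B) → (A → ∀x B), x not free in A -/
  | allImp (x : ℕ) (A B : IForm) (h : x ∉ A.freeVars) :
      IQC ((IForm.all x (A.impl B)).impl (A.impl (IForm.all x B)))
  /-- ∀x(A → B) → (∃x A → B), x not free in B -/
  | exImp (x : ℕ) (A B : IForm) (h : x ∉ B.freeVars) :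
      IQC ((IForm.all x (A.impl B)).impl ((IForm.ex x A).impl B))
  | mp (A B : IForm) : IQC (A.impl B) → IQC A → IQC B
  | gen (x : ℕ) (A : IForm) : IQC A → IQC (.all x A)

/-! ## The temporal Gödel translation -/

def IForm.t : IForm → TForm
  | .falsum => .falsum
  | .atom p args => .boxF (.atom p args)
  | .and A B => TForm.and A.t B.t
  | .or A B => TForm.or A.t B.t
  | .impl A B => .boxF (A.t.impl B.t)
  | .all x A => .boxF (.all x A.t)
  | .ex x A => TForm.diaP (TForm.ex x A.t)

/-- `closure [x₁,…,xₙ] A = ∀x₁ ⋯ ∀xₙ A`. -/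
def TForm.closure (xs : List ℕ) (A : TForm) : TForm := xs.foldr TForm.all A

/-! ## Generalized Kripke semantics for Q∘S4.t -/

/-- A Q∘S4.t-frame: a reflexive transitive relation on a nonempty set of worlds,
a nonempty constant outer domain `U`, and nonempty increasing inner domains. -/
structure TFrame where
  W : Type
  U : Type
  hW : Nonempty W
  hU : Nonempty U
  R : W → W → Prop
  refl : ∀ w, R w w
  trans : ∀ {u v w}, R u v → R v w → R u w
  D : W → Set U
  Dne : ∀ w, (D w).Nonempty
  Dmono : ∀ {w v}, R w v → D w ⊆ D v

/-- A model based on a Q∘S4.t-frame: interprets each predicate symbol at each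
world as a relation on the outer domain. -/
structure TModel (F : TFrame) where
  I : F.W → ℕ → List F.U → Prop

/-- Truth of an `L_T`-formula at a world under an assignment. -/
def TModel.truth {F : TFrame} (M : TModel F) : F.W → (ℕ → F.U) → TForm → Prop
  | _, _, .falsum => False
  | w, σ, .atom p args => M.I w p (args.map σ)
  | w, σ, .impl A B => M.truth w σ A → M.truth w σ B
  | w, σ, .all x A =>
      ∀ τ : ℕ → F.U, (∀ y, y ≠ x → τ y = σ y) → τ x ∈ F.D w → M.truth w τ A
  | w, σ, .boxF A => ∀ v, F.R w v → M.truth v σ A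
  | w, σ, .boxP A => ∀ v, F.R v w → M.truth v σ A

/-- Validity of an `L_T`-formula in a Q∘S4.t-frame. -/
def TFrame.valid (F : TFrame) (A : TForm) : Prop :=
  ∀ M : TModel F, ∀ w : F.W, ∀ σ : ℕ → F.U, M.truth w σ A

/-! ## Kripke semantics for IQC -/

/-- An IQC-frame: a partial order on a nonempty set of worlds with nonempty
increasing domains. -/
structure IFrame where
  W : Type
  α : Type
  hW : Nonempty W
  R : W → W → Prop
  refl : ∀ w, R w w
  trans : ∀ {u v w}, R u v → R v w → R u w
  antisymm : ∀ {u v}, R u v → R v u → u = v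
  D : W → Set α
  Dne : ∀ w, (D w).Nonempty
  Dmono : ∀ {w v}, R w v → D w ⊆ D v

/-- An IQC-model: `I w P ⊆ (D w)ⁿ`, increasing along `R`. -/
structure IModel (F : IFrame) where
  I : F.W → ℕ → List F.α → Prop
  Isub : ∀ w p as, I w p as → ∀ a ∈ as, a ∈ F.D w
  Imono : ∀ {w v} (p : ℕ) (as : List F.α), F.R w v → I w p as → I v p as

/-- Intuitionistic truth of an `L`-formula at a world under an assignment. -/
def IModel.truth {F : IFrame} (M : IModel F) : F.W → (ℕ → F.α) → IForm → Prop
  | _, _, .falsum => False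
  | w, σ, .atom p args => M.I w p (args.map σ)
  | w, σ, .and A B => M.truth w σ A ∧ M.truth w σ B
  | w, σ, .or A B => M.truth w σ A ∨ M.truth w σ B
  | w, σ, .impl A B => ∀ v, F.R w v → M.truth v σ A → M.truth v σ B
  | w, σ, .all x A =>
      ∀ v, F.R w v → ∀ τ : ℕ → F.α, (∀ y, y ≠ x → τ y = σ y) → τ x ∈ F.D v →
        M.truth v τ A
  | w, σ, .ex x A =>
      ∃ τ : ℕ → F.α, (∀ y, y ≠ x → τ y = σ y) ∧ τ x ∈ F.D w ∧ M.truth w τ A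

/-! ## The associated Q∘S4.t-model M̄ -/

/-- The Q∘S4.t-frame associated to an IQC-frame: same worlds and relation,
outer domain `U = ⋃ { D_w ∣ w ∈ W }`, same inner domains. -/
def IFrame.bar (F : IFrame) : TFrame where
  W := F.W
  U := {a : F.α // ∃ w, a ∈ F.D w}
  hW := F.hW
  hU := by
    obtain ⟨w⟩ := F.hW
    obtain ⟨a, ha⟩ := F.Dne w
    exact ⟨⟨a, w, ha⟩⟩
  R := F.R
  refl := F.refl
  trans := F.trans
  D := fun w => {a | a.1 ∈ F.D w}
  Dne := fun w => by
    obtain ⟨a, ha⟩ := F.Dne w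
    exact ⟨⟨a, w, ha⟩, ha⟩
  Dmono := fun h _ ha => F.Dmono h ha

/-- The Q∘S4.t-model `M̄` associated to an IQC-model `M`. -/
def IModel.bar {F : IFrame} (M : IModel F) : TModel F.bar where
  I := fun w p as => M.I w p (as.map Subtype.val)

/-!
By induction on IQC-derivations, every universal closure of `A^t` over a list of variables
containing the free ones is derivable in Q∘S4.t; closures over arbitrary such lists are
needed because a premise of modus ponens may have more free variables than its conclusion.
The induction rests on stability of translated formulas, `A^t → □_F A^t`: atoms,
implications and universal formulas begin with `□_F`, conjunctions and disjunctions inherit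
it, and `◇_P B → □_F ◇_P B` follows from the tense axiom `B → □_F ◇_P B` and axiom 4
for `□_P`. The purely classical steps are tautologies, obtained from the propositional axioms
of S4.t by Kalmár's completeness argument and certified by evaluating truth tables.
-/

inductive CPC : List BForm → BForm → Prop
  | hyp {Γ : List BForm} {A : BForm} : A ∈ Γ → CPC Γ A
  | ax1 (Γ : List BForm) (A B : BForm) : CPC Γ (A.impl (B.impl A))
  | ax2 (Γ : List BForm) (A B C : BForm) :
      CPC Γ ((A.impl (B.impl C)).impl ((A.impl B).impl (A.impl C)))
  | ax3 (Γ : List BForm) (A B : BForm) : CPC Γ (((B.neg).impl (A.neg)).impl (A.impl B))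
  | mp {Γ : List BForm} {A B : BForm} : CPC Γ (A.impl B) → CPC Γ A → CPC Γ B

namespace CPC

variable {Γ Δ : List BForm} {A B : BForm}

theorem mono (h : CPC Γ A) (hΓ : Γ ⊆ Δ) : CPC Δ A := by
  induction h with
  | hyp hA => exact hyp (hΓ hA)
  | ax1 A B => exact ax1 _ A B
  | ax2 A B C => exact ax2 _ A B C
  | ax3 A B => exact ax3 _ A B
  | mp _ _ ih₁ ih₂ => exact mp ih₁ ih₂

theorem imp_self : CPC Γ (A.impl A) :=
  mp (mp (ax2 Γ A (A.impl A) A) (ax1 Γ A (A.impl A))) (ax1 Γ A A)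

theorem deduction (h : CPC (A :: Γ) B) : CPC Γ (A.impl B) := by
  induction h with
  | hyp hB =>
    rcases List.mem_cons.1 hB with rfl | hB
    · exact imp_self
    · exact mp (ax1 _ _ _) (hyp hB)
  | ax1 => exact mp (ax1 _ _ _) (ax1 _ _ _)
  | ax2 => exact mp (ax1 _ _ _) (ax2 _ _ _ _)
  | ax3 => exact mp (ax1 _ _ _) (ax3 _ _ _)
  | mp _ _ ih₁ ih₂ => exact mp (mp (ax2 _ _ _ _) ih₁) ih₂

theorem falsum_imp : CPC Γ (BForm.falsum.impl A) :=
  mp (ax3 _ _ _) (mp (ax1 _ _ _) imp_self)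

theorem neg_imp : CPC Γ (A.neg.impl (A.impl B)) :=
  deduction <| deduction <|
    mp falsum_imp (mp (hyp (A := A.neg) (by simp)) (hyp (A := A) (by simp)))

theorem imp_neg_imp_neg_impl : CPC Γ (A.impl (B.neg.impl (A.impl B).neg)) :=
  deduction <| deduction <| deduction <|
    mp (hyp (A := B.neg) (by simp)) (mp (hyp (A := A.impl B) (by simp)) (hyp (A := A) (by simp)))

theorem imp_neg_neg : CPC Γ (A.impl A.neg.neg) :=
  deduction <| deduction <| mp (hyp (A := A.neg) (by simp)) (hyp (A := A) (by simp))

theorem contrapose (h : CPC Γ (A.impl B)) : CPC Γ (B.neg.impl A.neg) :=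
  deduction <| deduction <|
    mp (hyp (A := B.neg) (by simp)) (mp (h.mono fun _ h ↦ by simp [h]) (hyp (A := A) (by simp)))

theorem by_cases (h₁ : CPC Γ (A.impl B)) (h₂ : CPC Γ (A.neg.impl B)) : CPC Γ B := by
  have hnn : CPC Γ B.neg.neg := mp (mp (ax2 _ _ _ _) h₂.contrapose) h₁.contrapose
  exact mp (mp (ax3 _ _ _) imp_neg_neg) hnn

end CPC

def boolValuations : ℕ → List (ℕ → Bool)
  | 0 => [fun _ ↦ false]
  | n + 1 => (boolValuations n).flatMap fun v ↦
      [Function.update v n true, Function.update v n false]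

theorem exists_mem_boolValuations (n : ℕ) (v : ℕ → Bool) :
    ∃ u ∈ boolValuations n, ∀ i < n, u i = v i := by
  induction n with
  | zero => exact ⟨_, List.mem_singleton_self _, by simp⟩
  | succ n ih =>
    obtain ⟨u, hu, huv⟩ := ih
    refine ⟨Function.update u n (v n), ?_, fun i hi ↦ ?_⟩
    · simp only [boolValuations, List.mem_flatMap]
      exact ⟨u, hu, by cases v n <;> simp⟩
    · rcases Nat.lt_succ_iff_lt_or_eq.1 hi with hi | rfl
      · rw [Function.update_of_ne (by omega)]
        exact huv i hi
      · exact Function.update_self ..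

namespace BForm

def eval : BForm → (ℕ → Bool) → Bool
  | var n, v => v n
  | falsum, _ => false
  | impl A B, v => !A.eval v || B.eval v
  | boxF _, _ => false
  | boxP _, _ => false

def varBound : BForm → ℕ
  | var n => n + 1
  | falsum => 0
  | impl A B => max A.varBound B.varBound
  | boxF A => A.varBound
  | boxP A => A.varBound

def isBoxFree : BForm → Bool
  | var _ => true
  | falsum => true
  | impl A B => A.isBoxFree && B.isBoxFree
  | boxF _ => false
  | boxP _ => false

def isTautology (φ : BForm) : Bool :=
  φ.isBoxFree && (boolValuations φ.varBound).all φ.eval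

theorem eval_congr {φ : BForm} {u v : ℕ → Bool} (h : ∀ i < φ.varBound, u i = v i) :
    φ.eval u = φ.eval v := by
  induction φ with
  | var n => exact h n (Nat.lt_succ_self n)
  | falsum | boxF | boxP => rfl
  | impl A B ihA ihB =>
    simp only [varBound, lt_max_iff] at h
    simp only [eval, ihA fun i hi ↦ h i (.inl hi), ihB fun i hi ↦ h i (.inr hi)]

theorem eval_of_isTautology {φ : BForm} (h : φ.isTautology = true) (v : ℕ → Bool) :
    φ.eval v = true := by
  obtain ⟨u, hu, huv⟩ := exists_mem_boolValuations φ.varBound v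
  simp only [isTautology, Bool.and_eq_true, List.all_eq_true] at h
  rw [← eval_congr huv]
  exact h.2 u hu

def literal (v : ℕ → Bool) (i : ℕ) : BForm := if v i then var i else (var i).neg

end BForm

open BForm in
theorem CPC.kalmar {φ : BForm} (hφ : φ.isBoxFree = true) {n : ℕ} (hn : φ.varBound ≤ n)
    (v : ℕ → Bool) :
    CPC ((List.range n).map (literal v)) (if φ.eval v then φ else φ.neg) := by
  induction φ with
  | var m =>
    have hm : literal v m ∈ (List.range n).map (literal v) :=
      List.mem_map_of_mem (List.mem_range.2 hn)
    cases hv : v m <;> simpa [eval, literal, hv] using hyp hm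
  | falsum => exact imp_self
  | boxF | boxP => simp [isBoxFree] at hφ
  | impl A B ihA ihB =>
    simp only [isBoxFree, Bool.and_eq_true] at hφ
    simp only [varBound, max_le_iff] at hn
    have hA := ihA hφ.1 hn.1
    have hB := ihB hφ.2 hn.2
    cases hvA : A.eval v <;> cases hvB : B.eval v <;>
      simp only [hvA, hvB, if_true, if_false, Bool.false_eq_true] at hA hB <;>
      simp only [eval, hvA, hvB, Bool.not_false, Bool.not_true, Bool.true_or, Bool.or_false,
        Bool.false_or, if_true, if_false, Bool.false_eq_true]
    · exact mp neg_imp hA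
    · exact mp neg_imp hA
    · exact mp (mp imp_neg_imp_neg_impl hA) hB
    · exact mp (ax1 _ _ _) hB

open BForm in
theorem CPC.of_literals_succ {φ : BForm} {k : ℕ}
    (h : ∀ v, CPC ((List.range (k + 1)).map (literal v)) φ) (v : ℕ → Bool) :
    CPC ((List.range k).map (literal v)) φ := by
  have hsub : ∀ b, (List.range (k + 1)).map (literal (Function.update v k b)) ⊆
      literal (Function.update v k b) k :: (List.range k).map (literal v) := by
    intro b ψ hψ
    obtain ⟨i, hi, rfl⟩ := List.mem_map.1 hψ
    rcases Nat.lt_succ_iff_lt_or_eq.1 (List.mem_range.1 hi) with hi | rfl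
    · refine List.mem_cons_of_mem _ (List.mem_map.2 ⟨i, List.mem_range.2 hi, ?_⟩)
      simp [literal, Function.update_of_ne (Nat.ne_of_lt hi)]
    · exact List.mem_cons_self
  have hpos := (h (Function.update v k true)).mono (hsub true)
  have hneg := (h (Function.update v k false)).mono (hsub false)
  simp only [literal, Function.update_self, if_true, Bool.false_eq_true, if_false] at hpos hneg
  exact by_cases hpos.deduction hneg.deduction

theorem CPC.of_isTautology {φ : BForm} (h : φ.isTautology = true) : CPC [] φ := by
  have hφ : φ.isBoxFree = true := by simp_all [BForm.isTautology]
  have hall : ∀ v, CPC ((List.range φ.varBound).map (BForm.literal v)) φ := fun v ↦ by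
    simpa [BForm.eval_of_isTautology h v] using kalmar hφ le_rfl v
  simpa using Nat.decreasingInduction (motive := fun k _ ↦
      ∀ v, CPC ((List.range k).map (BForm.literal v)) φ)
    (fun _ _ ih ↦ of_literals_succ ih) hall (Nat.zero_le _) fun _ ↦ false

theorem S4t.of_CPC {φ : BForm} (h : CPC [] φ) : S4t φ := by
  induction h with
  | hyp hA => simp at hA
  | ax1 A B => exact ax1 A B
  | ax2 A B C => exact ax2 A B C
  | ax3 A B => exact ax3 A B
  | mp _ _ ih₁ ih₂ => exact mp _ _ ih₁ ih₂

namespace TForm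

theorem substOK_self (x : ℕ) (X : TForm) : X.substOK x x := by
  induction X with
  | falsum | atom => trivial
  | impl _ _ ihA ihB => exact ⟨ihA, ihB⟩
  | all z _ ih => exact (em (z = x)).imp id fun hz ↦ ⟨fun h ↦ absurd h hz, ih⟩
  | boxF _ ih | boxP _ ih => exact ih

theorem subst_self (x : ℕ) (X : TForm) : X.subst x x = X := by
  induction X with
  | falsum => rfl
  | atom p args => rw [subst, List.map_id'' fun v ↦ ite_eq_right_iff.2 Eq.symm]
  | all z A ih => by_cases hz : z = x <;> simp [subst, hz, ih]
  | impl _ _ ihA ihB => simp [subst, ihA, ihB]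
  | boxF _ ih | boxP _ ih => simp [subst, ih]

theorem closure_append (ys xs : List ℕ) (X : TForm) :
    closure (ys ++ xs) X = closure ys (closure xs X) :=
  List.foldr_append ..

theorem freeVars_closure (xs : List ℕ) (X : TForm) :
    (closure xs X).freeVars = X.freeVars \ xs.toFinset := by
  induction xs with
  | nil => simp [closure]
  | cons z xs ih =>
    change (closure xs X).freeVars.erase z = _
    rw [ih, List.toFinset_cons, Finset.sdiff_insert]

def ClosuresProvable (X : TForm) : Prop :=
  ∀ xs : List ℕ, X.freeVars ⊆ xs.toFinset → QoS4t (closure xs X)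

end TForm

namespace IForm

theorem freeVars_t (A : IForm) : A.t.freeVars = A.freeVars := by
  induction A <;> simp_all [t, freeVars, TForm.freeVars, TForm.and, TForm.or, TForm.neg,
    TForm.ex, TForm.diaP]

theorem t_subst (x y : ℕ) (A : IForm) : (A.subst x y).t = A.t.subst x y := by
  induction A with
  | all z A ih | ex z A ih =>
    by_cases hz : z = x <;>
      simp [subst, t, hz, ih, TForm.subst, TForm.ex, TForm.diaP, TForm.neg]
  | _ => simp_all [subst, t, TForm.subst, TForm.and, TForm.or, TForm.neg]

theorem substOK_t {x y : ℕ} {A : IForm} (h : A.substOK x y) : A.t.substOK x y := by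
  induction A <;> simp_all [substOK, t, TForm.substOK, TForm.and, TForm.or, TForm.neg,
    TForm.ex, TForm.diaP, TForm.freeVars, freeVars_t] <;> tauto

end IForm

def BForm.and (A B : BForm) : BForm := (A.impl B.neg).neg
def BForm.or (A B : BForm) : BForm := A.neg.impl B

namespace QoS4t

local prefix:max "#" => BForm.var
local prefix:max "∼" => BForm.neg
local infixr:25 " ⟹ " => BForm.impl
local infixl:35 " ⋏ " => BForm.and
local infixl:30 " ⋎ " => BForm.or

variable {X Y Z : TForm}

theorem mp' (hXY : QoS4t (X.impl Y)) (hX : QoS4t X) : QoS4t Y := mp X Y hXY hX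

theorem ofS4t {φ : BForm} (h : S4t φ) (l : List TForm) :
    QoS4t (φ.tsubst (l.getD · .falsum)) :=
  s4t φ _ h

theorem taut (φ : BForm) (l : List TForm) (hφ : φ.isTautology = true := by decide) :
    QoS4t (φ.tsubst (l.getD · .falsum)) :=
  ofS4t (S4t.of_CPC (CPC.of_isTautology hφ)) l

theorem tF (X : TForm) : QoS4t (X.boxF.impl X) := ofS4t (S4t.tF #0) [X]

theorem kF (X Y : TForm) : QoS4t ((X.impl Y).boxF.impl (X.boxF.impl Y.boxF)) :=
  ofS4t (S4t.kF #0 #1) [X, Y]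

theorem fourF (X : TForm) : QoS4t (X.boxF.impl X.boxF.boxF) := ofS4t (S4t.fourF #0) [X]

theorem tP (X : TForm) : QoS4t (X.boxP.impl X) := ofS4t (S4t.tP #0) [X]

theorem kP (X Y : TForm) : QoS4t ((X.impl Y).boxP.impl (X.boxP.impl Y.boxP)) :=
  ofS4t (S4t.kP #0 #1) [X, Y]

theorem fourP (X : TForm) : QoS4t (X.boxP.impl X.boxP.boxP) := ofS4t (S4t.fourP #0) [X]

theorem tense1 (X : TForm) : QoS4t (X.impl X.diaF.boxP) := ofS4t (S4t.tense1 #0) [X]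

theorem tense2 (X : TForm) : QoS4t (X.impl X.diaP.boxF) := ofS4t (S4t.tense2 #0) [X]

theorem imp_trans (hXY : QoS4t (X.impl Y)) (hYZ : QoS4t (Y.impl Z)) : QoS4t (X.impl Z) :=
  ((taut ((#0 ⟹ #1) ⟹ (#1 ⟹ #2) ⟹ #0 ⟹ #2) [X, Y, Z]).mp' hXY).mp' hYZ

theorem boxF_mono (h : QoS4t (X.impl Y)) : QoS4t (X.boxF.impl Y.boxF) :=
  (kF X Y).mp' (necF _ h)

theorem boxP_mono (h : QoS4t (X.impl Y)) : QoS4t (X.boxP.impl Y.boxP) :=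
  (kP X Y).mp' (necP _ h)

theorem imp_boxF (hX : QoS4t (X.impl X.boxF)) (h : QoS4t (X.impl Y)) :
    QoS4t (X.impl Y.boxF) :=
  imp_trans hX (boxF_mono h)

theorem boxF_mono₂ {W : TForm} (h : QoS4t (X.impl (Y.impl W))) :
    QoS4t (X.boxF.impl (Y.boxF.impl W.boxF)) :=
  imp_trans (boxF_mono h) (kF Y W)

theorem impl_mono_right (h : QoS4t (Y.impl Z)) (W : TForm) :
    QoS4t ((W.impl Y).impl (W.impl Z)) :=
  (taut ((#1 ⟹ #2) ⟹ (#0 ⟹ #1) ⟹ #0 ⟹ #2) [W, Y, Z]).mp' h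

theorem impl_anti_left (h : QoS4t (X.impl Y)) (W : TForm) :
    QoS4t ((Y.impl W).impl (X.impl W)) :=
  (taut ((#0 ⟹ #1) ⟹ (#1 ⟹ #2) ⟹ #0 ⟹ #2) [X, Y, W]).mp' h

theorem imp_imp_trans {W : TForm} (h₁ : QoS4t (X.impl (Y.impl Z))) (h₂ : QoS4t (W.impl Y)) :
    QoS4t (X.impl (W.impl Z)) :=
  ((taut ((#0 ⟹ #1 ⟹ #2) ⟹ (#3 ⟹ #1) ⟹ #0 ⟹ #3 ⟹ #2) [X, Y, Z, W]).mp' h₁).mp' h₂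

theorem imp_diaP (X : TForm) : QoS4t (X.impl X.diaP) :=
  (taut ((#0 ⟹ ∼#1) ⟹ #1 ⟹ ∼#0) [X.neg.boxP, X]).mp' (tP X.neg)

theorem diaP_imp_boxF_diaP (X : TForm) : QoS4t (X.diaP.impl X.diaP.boxF) := by
  have hdiaP : QoS4t (X.diaP.diaP.impl X.diaP) :=
    (taut ((#0 ⟹ #1) ⟹ ∼#1 ⟹ ∼#0) [X.neg.boxP, X.neg.boxP.neg.neg.boxP]).mp' <|
      imp_trans (fourP X.neg) (boxP_mono (taut (#0 ⟹ ∼∼#0) [X.neg.boxP]))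
  exact imp_trans (tense2 X.diaP) (boxF_mono hdiaP)

theorem all_mono (x : ℕ) (h : QoS4t (X.impl Y)) : QoS4t ((X.all x).impl (Y.all x)) :=
  (distrib x X Y).mp' (gen x _ h)

theorem all_comm (x y : ℕ) (X : TForm) : QoS4t (((X.all y).all x).impl ((X.all x).all y)) :=
  (taut (#0 ⋏ #1 ⟹ #0) [((X.all y).all x).impl ((X.all x).all y),
    ((X.all x).all y).impl ((X.all y).all x)]).mp' (comm x y X)

theorem all_boxF_of_all {x : ℕ} (h : QoS4t (X.all x)) : QoS4t (X.boxF.all x) :=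
  (cbfF x X).mp' (necF _ h)

theorem all_all_imp_self (x : ℕ) (X : TForm) : QoS4t (((X.all x).impl X).all x) := by
  simpa only [TForm.subst_self] using ui x x X (TForm.substOK_self x X)

open TForm

theorem closure_of (h : QoS4t X) (xs : List ℕ) : QoS4t (closure xs X) := by
  induction xs with
  | nil => exact h
  | cons z xs ih => exact gen z _ ih

theorem closure_mono (xs : List ℕ) (h : QoS4t (X.impl Y)) :
    QoS4t ((closure xs X).impl (closure xs Y)) := by
  induction xs with
  | nil => exact h
  | cons z xs ih => exact all_mono z ih

theorem closure_distrib (xs : List ℕ) (X Y : TForm) :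
    QoS4t ((closure xs (X.impl Y)).impl ((closure xs X).impl (closure xs Y))) := by
  induction xs with
  | nil => exact taut (#0 ⟹ #0) [X.impl Y]
  | cons z xs ih => exact imp_trans (all_mono z ih) (distrib z _ _)

theorem closure_mp {xs : List ℕ} (hXY : QoS4t (closure xs (X.impl Y)))
    (hX : QoS4t (closure xs X)) : QoS4t (closure xs Y) :=
  ((closure_distrib xs X Y).mp' hXY).mp' hX

theorem all_closure_of_all {y : ℕ} (zs : List ℕ) (h : QoS4t (X.all y)) :
    QoS4t ((closure zs X).all y) := by
  induction zs with
  | nil => exact h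
  | cons z zs ih => exact (all_comm z y _).mp' (gen z _ ih)

theorem closure_of_all {y : ℕ} {xs : List ℕ} (hy : y ∈ xs) (h : QoS4t (X.all y)) :
    QoS4t (closure xs X) := by
  induction xs with
  | nil => simp at hy
  | cons z xs ih =>
    rcases List.mem_cons.1 hy with rfl | hy
    · exact all_closure_of_all xs h
    · exact gen z _ (ih hy)

theorem boxF_closure_imp_closure_boxF (xs : List ℕ) (X : TForm) :
    QoS4t ((closure xs X).boxF.impl (closure xs X.boxF)) := by
  induction xs with
  | nil => exact taut (#0 ⟹ #0) [X.boxF]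
  | cons z xs ih => exact imp_trans (cbfF z _) (all_mono z ih)

theorem of_closure {ys : List ℕ} (hX : X.freeVars = ∅) (h : QoS4t (closure ys X)) :
    QoS4t X := by
  induction ys with
  | nil => exact h
  | cons y ys ih => exact ih ((nid y _ (by simp [freeVars_closure, hX])).mp' h)

theorem t_imp_boxF_t (A : IForm) : QoS4t (A.t.impl A.t.boxF) := by
  induction A with
  | falsum => exact taut (BForm.falsum ⟹ #0) [TForm.falsum.boxF]
  | atom | impl | all => exact fourF _
  | ex => exact diaP_imp_boxF_diaP _
  | and A B ihA ihB =>
    have hK : QoS4t (A.t.boxF.impl (B.t.boxF.impl (A.t.and B.t).boxF)) :=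
      boxF_mono₂ (taut (#0 ⟹ #1 ⟹ #0 ⋏ #1) [A.t, B.t])
    exact (((taut ((#0 ⟹ #1) ⟹ (#2 ⟹ #3) ⟹ (#1 ⟹ #3 ⟹ #4) ⟹ #0 ⋏ #2 ⟹ #4)
      [A.t, A.t.boxF, B.t, B.t.boxF, (A.t.and B.t).boxF]).mp' ihA).mp' ihB).mp' hK
  | or A B ihA ihB =>
    have hA := imp_trans ihA (boxF_mono (taut (#0 ⟹ #0 ⋎ #1) [A.t, B.t]))
    have hB := imp_trans ihB (boxF_mono (taut (#1 ⟹ #0 ⋎ #1) [A.t, B.t]))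
    exact ((taut ((#0 ⟹ #2) ⟹ (#1 ⟹ #2) ⟹ #0 ⋎ #1 ⟹ #2)
      [A.t, B.t, (A.t.or B.t).boxF]).mp' hA).mp' hB

theorem t_isubst_of_IPC {φ : PropForm} (h : IPC φ) (s : ℕ → IForm) :
    QoS4t (φ.isubst s).t := by
  induction h with
  | ax1 A B =>
    exact necF _ (imp_boxF (t_imp_boxF_t _)
      (taut (#0 ⟹ #1 ⟹ #0) [(A.isubst s).t, (B.isubst s).t]))
  | ax2 A B C =>
    set a := (A.isubst s).t
    set b := (B.isubst s).t
    set c := (C.isubst s).t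
    have hS : QoS4t ((a.impl (b.impl c).boxF).impl ((a.impl b).impl (a.impl c))) :=
      (taut ((#3 ⟹ #1 ⟹ #2) ⟹ (#0 ⟹ #3) ⟹ (#0 ⟹ #1) ⟹ #0 ⟹ #2)
        [a, b, c, (b.impl c).boxF]).mp' (tF _)
    exact necF _ (imp_boxF (fourF _) (boxF_mono₂ hS))
  | andE1 A B => exact necF _ (taut (#0 ⋏ #1 ⟹ #0) [(A.isubst s).t, (B.isubst s).t])
  | andE2 A B => exact necF _ (taut (#0 ⋏ #1 ⟹ #1) [(A.isubst s).t, (B.isubst s).t])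
  | andI A B =>
    exact necF _ (imp_boxF (t_imp_boxF_t _)
      (taut (#0 ⟹ #1 ⟹ #0 ⋏ #1) [(A.isubst s).t, (B.isubst s).t]))
  | orI1 A B => exact necF _ (taut (#0 ⟹ #0 ⋎ #1) [(A.isubst s).t, (B.isubst s).t])
  | orI2 A B => exact necF _ (taut (#1 ⟹ #0 ⋎ #1) [(A.isubst s).t, (B.isubst s).t])
  | orE A B C =>
    exact necF _ (imp_boxF (fourF _) (boxF_mono₂
      (taut ((#0 ⟹ #2) ⟹ (#1 ⟹ #2) ⟹ #0 ⋎ #1 ⟹ #2)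
        [(A.isubst s).t, (B.isubst s).t, (C.isubst s).t])))
  | exfalso A => exact necF _ (taut (BForm.falsum ⟹ #0) [(A.isubst s).t])
  | mp _ _ _ _ ihAB ihA => exact ((tF _).mp' ihAB).mp' ihA

theorem all_t_ui {x y : ℕ} {A : IForm} (hok : A.substOK x y) :
    QoS4t (((IForm.all x A).impl (A.subst x y)).t.all y) := by
  simp only [IForm.t, IForm.t_subst]
  exact all_boxF_of_all ((all_mono y (impl_anti_left (tF _) _)).mp'
    (ui x y A.t (IForm.substOK_t hok)))

theorem all_t_exI {x y : ℕ} {A : IForm} (hok : A.substOK x y) :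
    QoS4t (((A.subst x y).impl (IForm.ex x A)).t.all y) := by
  simp only [IForm.t, IForm.t_subst]
  have hex : QoS4t ((((A.t.neg).all x).impl (A.t.subst x y).neg).impl
      ((A.t.subst x y).impl (A.t.ex x))) :=
    taut ((#0 ⟹ ∼#1) ⟹ #1 ⟹ ∼#0) [A.t.neg.all x, A.t.subst x y]
  exact all_boxF_of_all ((all_mono y (imp_trans hex (impl_mono_right (imp_diaP _) _))).mp'
    (ui x y A.t.neg ⟨IForm.substOK_t hok, trivial⟩))

theorem t_allImp {x : ℕ} {A : IForm} (B : IForm) (hx : x ∉ A.freeVars) :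
    QoS4t ((IForm.all x (A.impl B)).impl (A.impl (IForm.all x B))).t := by
  simp only [IForm.t]
  have hdistrib : QoS4t ((((A.t.impl B.t).boxF).all x).impl (A.t.impl (B.t.all x))) :=
    imp_imp_trans (imp_trans (all_mono x (tF _)) (distrib x _ _))
      (vac x A.t (by rwa [IForm.freeVars_t]))
  exact necF _ (imp_boxF (fourF _) (imp_imp_trans (boxF_mono₂ hdistrib) (t_imp_boxF_t A)))

theorem t_exImp {x : ℕ} (A : IForm) {B : IForm} (hx : x ∉ B.freeVars) :
    QoS4t ((IForm.all x (A.impl B)).impl ((IForm.ex x A).impl B)).t := by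
  simp only [IForm.t]
  set a := A.t
  set b := B.t
  set G := ((a.impl b).boxF.all x).boxF
  set X := G.and b.neg
  have hexcl : QoS4t ((a.impl X.neg).all x) := by
    refine (all_mono x ?_).mp' (all_all_imp_self x (a.impl b).boxF)
    refine imp_trans (impl_anti_left (tF _) _) (imp_trans (impl_mono_right (tF _) _) ?_)
    exact taut ((#0 ⟹ #1 ⟹ #2) ⟹ #1 ⟹ ∼(#0 ⋏ ∼#2)) [G, a, b]
  have hexclF : QoS4t ((a.impl X.neg.boxF).all x) :=
    (all_mono x (imp_imp_trans (kF a X.neg) (t_imp_boxF_t A))).mp' (all_boxF_of_all hexcl)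
  have hXfv : x ∉ X.diaF.freeVars := by
    simp [X, G, b, TForm.diaF, TForm.and, TForm.neg, TForm.freeVars, IForm.freeVars_t, hx]
  have hdiaF : QoS4t (X.diaF.impl (a.neg.all x)) :=
    imp_trans (vac x _ hXfv) ((distrib x _ _).mp'
      ((all_mono x (taut ((#0 ⟹ #1) ⟹ ∼#1 ⟹ ∼#0) [a, X.neg.boxF])).mp' hexclF))
  -- A witness of `∃x a` persists to every later moment, where `G` turns it into `b`; so by
  -- `X → □_P ◇_F X`, no moment before one satisfying `X` has such a witness.
  have hX : QoS4t (X.impl (a.ex x).diaP.neg) :=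
    imp_trans (imp_trans (tense1 X) (boxP_mono (imp_trans hdiaF
      (taut (#0 ⟹ ∼∼#0) [a.neg.all x])))) (taut (#0 ⟹ ∼∼#0) [(a.ex x).neg.boxP])
  exact necF _ (imp_boxF (fourF _)
    ((taut ((#0 ⋏ ∼#1 ⟹ ∼#2) ⟹ #0 ⟹ #2 ⟹ #1) [G, b, (a.ex x).diaP]).mp' hX))

end QoS4t

namespace TForm.ClosuresProvable

open QoS4t

variable {X Y : TForm}

theorem of_provable (h : QoS4t X) : X.ClosuresProvable := fun xs _ ↦ h.closure_of xs

theorem of_all {y : ℕ} (h : QoS4t (X.all y)) : X.ClosuresProvable := by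
  intro xs hxs
  by_cases hy : y ∈ xs
  · exact closure_of_all hy h
  · exact ((nid y X fun hyX ↦ hy (List.mem_toFinset.1 (hxs hyX))).mp' h).closure_of xs

theorem mp' (hXY : (X.impl Y).ClosuresProvable) (hX : X.ClosuresProvable) :
    Y.ClosuresProvable := by
  intro xs hY
  set ds := (X.freeVars \ xs.toFinset).toList
  have hcover : (X.impl Y).freeVars ⊆ (ds ++ xs).toFinset := by
    intro v hv
    simp only [freeVars, Finset.mem_union] at hv
    simp only [ds, List.toFinset_append, Finset.toList_toFinset, Finset.mem_union,
      Finset.mem_sdiff]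
    tauto
  have hds : QoS4t (closure ds (closure xs Y)) := by
    rw [← closure_append]
    exact closure_mp (hXY _ hcover) (hX _ (Finset.union_subset_left hcover))
  exact of_closure (by rwa [freeVars_closure, Finset.sdiff_eq_empty_iff_subset]) hds

theorem of_boxF (h : X.boxF.ClosuresProvable) : X.ClosuresProvable :=
  fun xs hxs ↦ (closure_mono xs (tF X)).mp' (h xs hxs)

theorem boxF_all (h : X.ClosuresProvable) (x : ℕ) : (X.all x).boxF.ClosuresProvable := by
  intro xs hxs
  have hX : QoS4t (closure xs (X.all x)) := by
    refine closure_append xs [x] X ▸ h _ fun v hv ↦ ?_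
    by_cases hvx : v = x
    · simp [hvx]
    · simpa [hvx] using hxs (Finset.mem_erase.2 ⟨hvx, hv⟩)
  exact (boxF_closure_imp_closure_boxF xs _).mp' (necF _ hX)

end TForm.ClosuresProvable

open QoS4t in
theorem IQC.closuresProvable_t {A : IForm} (h : IQC A) : A.t.ClosuresProvable := by
  induction h with
  | ipc φ s hφ => exact .of_provable (t_isubst_of_IPC hφ s)
  | ui x y A hok => exact .of_all (all_t_ui hok)
  | exI x y A hok => exact .of_all (all_t_exI hok)
  | allImp x A B hx => exact .of_provable (t_allImp B hx)
  | exImp x A B hx => exact .of_provable (t_exImp A hx)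
  | mp _ _ _ _ ihAB ihA => exact ihAB.of_boxF.mp' ihA
  | gen x A _ ih => exact ih.boxF_all x

theorem faithfulness_of_temporal_translation_general
    (A : IForm) (xs : List ℕ) (hfv : xs.toFinset = A.freeVars)
    (h : IQC A) :
    QoS4t (TForm.closure xs A.t) := by
  exact h.closuresProvable_t xs (by rw [IForm.freeVars_t, hfv])

/-- **Faithfulness.** If `A` is provable in IQC, then `∀x₁ ⋯ ∀xₙ A^t` is
provable in Q∘S4.t, where `x₁, …, xₙ` are the free variables of `A`. -/
theorem faithfulness_of_temporal_translation
    (A : IForm) (xs : List ℕ) (hnd : xs.Nodup) (hfv : xs.toFinset = A.freeVars)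
    (h : IQC A) :
    QoS4t (TForm.closure xs A.t) :=
  faithfulness_of_temporal_translation_general A xs hfv h
end

section
/- (Soundness of Q∘S4.t) For every formula A of L_T and every Q∘S4.t-frame F: if A is provable in Q∘S4.t, then A is valid in F. -/
section Aux

lemma truth_mono {F : TFrame} (M : TModel F) :
    ∀ (A : TForm) (w : F.W) (σ σ' : ℕ → F.U),
      (∀ v ∈ A.freeVars, σ v = σ' v) → M.truth w σ A → M.truth w σ' A := by
  intro A
  induction A with
  | falsum => intro w σ σ' _ hT; exact hT
  | atom p args =>
      intro w σ σ' h hT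
      simp only [TModel.truth] at hT ⊢
      have he : args.map σ' = args.map σ := by
        apply List.map_congr_left
        intro v hv
        exact (h v (by simpa [TForm.freeVars] using hv)).symm
      rw [he]; exact hT
  | impl A B ihA ihB =>
      intro w σ σ' h hT hA
      refine ihB w σ σ' (fun v hv => h v ?_)
        (hT (ihA w σ' σ (fun v hv => (h v ?_).symm) hA))
      · simp only [TForm.freeVars, Finset.mem_union]; exact Or.inr hv
      · simp only [TForm.freeVars, Finset.mem_union]; exact Or.inl hv
  | all x A ih =>
      intro w σ σ' h hT τ' hτ' hD
      have h1 : M.truth w (fun v => if v = x then τ' x else σ v) A :=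
        hT _ (fun y hy => by simp [hy]) (by simpa using hD)
      refine ih w _ τ' (fun v hv => ?_) h1
      by_cases hvx : v = x
      · simp [hvx]
      · simp only [if_neg hvx]
        rw [h v (Finset.mem_erase.mpr ⟨hvx, hv⟩), hτ' v hvx]
  | boxF A ih =>
      intro w σ σ' h hT u hu
      exact ih u σ σ' h (hT u hu)
  | boxP A ih =>
      intro w σ σ' h hT u hu
      exact ih u σ σ' h (hT u hu)

lemma subst_id : ∀ (A : TForm) (x y : ℕ), x ∉ A.freeVars → A.subst x y = A := by
  intro A
  induction A with
  | falsum => intro x y _; rfl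
  | atom p args =>
      intro x y h
      simp only [TForm.subst, TForm.atom.injEq, true_and]
      have : ∀ v ∈ args, (if v = x then y else v) = v := by
        intro v hv
        refine if_neg ?_
        rintro rfl
        exact h (by simp [TForm.freeVars, hv])
      rw [List.map_congr_left this]; exact List.map_id' args
  | impl A B ihA ihB =>
      intro x y h
      simp only [TForm.freeVars, Finset.mem_union, not_or] at h
      simp only [TForm.subst, ihA x y h.1, ihB x y h.2]
  | all z A ih =>
      intro x y h
      simp only [TForm.subst]
      by_cases hz : z = x
      · simp [hz]
      · simp only [if_neg hz]
        rw [ih x y]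
        intro hx
        exact h (Finset.mem_erase.mpr ⟨fun e => hz e.symm, hx⟩)
  | boxF A ih => intro x y h; simp only [TForm.subst, ih x y h]
  | boxP A ih => intro x y h; simp only [TForm.subst, ih x y h]

lemma subst_truth {F : TFrame} (M : TModel F) :
    ∀ (A : TForm) (x y : ℕ), A.substOK x y → ∀ (w : F.W) (σ : ℕ → F.U),
      (M.truth w σ (A.subst x y) ↔ M.truth w (Function.update σ x (σ y)) A) := by
  intro A
  induction A with
  | falsum => intro x y _ w σ; exact Iff.rfl
  | atom p args =>
      intro x y _ w σ
      simp only [TForm.subst, TModel.truth, List.map_map]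
      have : (σ ∘ fun v => if v = x then y else v) = Function.update σ x (σ y) := by
        funext v
        by_cases hv : v = x <;> simp [hv, Function.update_apply]
      rw [this]
  | impl A B ihA ihB =>
      intro x y hok w σ
      obtain ⟨h1, h2⟩ := hok
      simp only [TForm.subst, TModel.truth]
      rw [ihA x y h1 w σ, ihB x y h2 w σ]
  | all z A ih =>
      intro x y hok w σ
      by_cases hzx : z = x
      · subst hzx
        simp only [TForm.subst, if_pos rfl]
        have agree : ∀ v ∈ (TForm.all z A).freeVars, σ v = Function.update σ z (σ y) v := by
          intro v hv
          have hvz : v ≠ z := (Finset.mem_erase.mp hv).1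
          rw [Function.update_of_ne hvz]
        exact ⟨fun h => truth_mono M _ w σ _ agree h,
               fun h => truth_mono M _ w _ σ (fun v hv => (agree v hv).symm) h⟩
      · have hok' : (z = y → x ∉ A.freeVars) ∧ A.substOK x y := by
          rcases hok with h | h
          · exact absurd h hzx
          · exact h
        simp only [TForm.subst, if_neg hzx]
        by_cases hxA : x ∈ A.freeVars
        · have hzy : z ≠ y := fun e => (hok'.1 e) hxA
          constructor
          · intro H τ' hτ' hD
            set τ := Function.update τ' x (σ x) with hτdef
            have hτσ : ∀ v, v ≠ z → τ v = σ v := by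
              intro v hv
              by_cases hvx : v = x
              · subst hvx; simp [hτdef]
              · rw [hτdef, Function.update_of_ne hvx, hτ' v hv,
                  Function.update_of_ne hvx]
            have hτz : τ z ∈ F.D w := by
              rw [hτdef, Function.update_of_ne hzx]; exact hD
            have h1 := (ih x y hok'.2 w τ).mp (H τ hτσ hτz)
            refine truth_mono M A w _ τ' (fun v hv => ?_) h1
            by_cases hvx : v = x
            · subst hvx
              rw [Function.update_self, hτσ y (fun e => hzy e.symm),
                hτ' v (fun e => hzx e.symm), Function.update_self]
            · rw [Function.update_of_ne hvx, hτdef, Function.update_of_ne hvx]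
          · intro H τ hτ hD
            rw [ih x y hok'.2 w τ]
            have hyσ : τ y = σ y := hτ y (fun e => hzy e.symm)
            have hτ'var : ∀ v, v ≠ z →
                Function.update τ x (σ y) v = Function.update σ x (σ y) v := by
              intro v hv
              by_cases hvx : v = x
              · subst hvx; rw [Function.update_self, Function.update_self]
              · rw [Function.update_of_ne hvx, Function.update_of_ne hvx, hτ v hv]
            have hτ'z : Function.update τ x (σ y) z ∈ F.D w := by
              rw [Function.update_of_ne hzx]; exact hD
            have h1 := H (Function.update τ x (σ y)) hτ'var hτ'z
            rw [hyσ]; exact h1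
        · rw [subst_id A x y hxA]
          have agree : ∀ v ∈ (TForm.all z A).freeVars, σ v = Function.update σ x (σ y) v := by
            intro v hv
            have hvA : v ∈ A.freeVars := (Finset.mem_erase.mp hv).2
            have hvx : v ≠ x := fun e => hxA (e ▸ hvA)
            rw [Function.update_of_ne hvx]
          exact ⟨fun h => truth_mono M _ w σ _ agree h,
                 fun h => truth_mono M _ w _ σ (fun v hv => (agree v hv).symm) h⟩
  | boxF A ih =>
      intro x y hok w σ
      simp only [TForm.subst, TModel.truth]
      exact ⟨fun h v hv => (ih x y hok v σ).mp (h v hv),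
             fun h v hv => (ih x y hok v σ).mpr (h v hv)⟩
  | boxP A ih =>
      intro x y hok w σ
      simp only [TForm.subst, TModel.truth]
      exact ⟨fun h v hv => (ih x y hok v σ).mp (h v hv),
             fun h v hv => (ih x y hok v σ).mpr (h v hv)⟩

lemma S4t_sound {F : TFrame} (M : TModel F) (φ : BForm) (s : ℕ → TForm) (h : S4t φ) :
    ∀ (w : F.W) (σ : ℕ → F.U), M.truth w σ (φ.tsubst s) := by
  induction h with
  | ax1 A B => intro w σ hA _; exact hA
  | ax2 A B C => intro w σ h1 h2 h3; exact h1 h3 (h2 h3)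
  | ax3 A B => intro w σ h1 h2; by_contra hB; exact h1 hB h2
  | kF A B => intro w σ h1 h2 v hv; exact h1 v hv (h2 v hv)
  | tF A => intro w σ h1; exact h1 w (F.refl w)
  | fourF A => intro w σ h1 v hv u hu; exact h1 u (F.trans hv hu)
  | kP A B => intro w σ h1 h2 v hv; exact h1 v hv (h2 v hv)
  | tP A => intro w σ h1; exact h1 w (F.refl w)
  | fourP A => intro w σ h1 v hv u hu; exact h1 u (F.trans hu hv)
  | tense1 A => intro w σ hA v hv hc; exact hc w hv hA
  | tense2 A => intro w σ hA v hv hc; exact hc w hv hA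
  | mp A B _ _ ih1 ih2 => intro w σ; exact ih1 w σ (ih2 w σ)
  | necF A _ ih => intro w σ v hv; exact ih v σ
  | necP A _ ih => intro w σ v hv; exact ih v σ

lemma comm_aux {F : TFrame} (M : TModel F) (x y : ℕ) (A : TForm) (w : F.W) (σ : ℕ → F.U)
    (H : M.truth w σ (TForm.all x (TForm.all y A))) :
    M.truth w σ (TForm.all y (TForm.all x A)) := by
  intro τ' hτ' hD' ρ' hρ' hD2
  refine H (Function.update σ x (ρ' x))
    (fun v hv => Function.update_of_ne hv _ _)
    (by rw [Function.update_self]; exact hD2) ρ' ?_ ?_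
  · intro v hv
    by_cases hvx : v = x
    · subst hvx; rw [Function.update_self]
    · rw [Function.update_of_ne hvx, hρ' v hvx, hτ' v hv]
  · by_cases hyx : y = x
    · rw [hyx]; exact hD2
    · rw [hρ' y hyx]; exact hD'

end Aux

/-- **Soundness of Q∘S4.t.** Every formula of `L_T` provable in Q∘S4.t is valid
in every Q∘S4.t-frame. -/
theorem QoS4t_soundness (A : TForm) (F : TFrame) (h : QoS4t A) :
    F.valid A := by
  induction h with
  | s4t φ s hφ => intro M w σ; exact S4t_sound M φ s hφ w σ
  | ui x y A hok =>
      intro M w σ τ hτ hD H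
      rw [subst_truth M A x y hok]
      exact H (Function.update τ x (τ y))
        (fun v hv => Function.update_of_ne hv _ _)
        (by rw [Function.update_self]; exact hD)
  | distrib x A B => intro M w σ H1 H2 τ hτ hD; exact H1 τ hτ hD (H2 τ hτ hD)
  | comm x y A =>
      intro M w σ h
      exact h (fun H => comm_aux M x y A w σ H) (fun H => comm_aux M y x A w σ H)
  | vac x A hx =>
      intro M w σ hA τ hτ hD
      exact truth_mono M A w σ τ (fun v hv => (hτ v (fun e => hx (by rw [e] at hv; exact hv))).symm) hA
  | nid x A hx =>
      intro M w σ H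
      obtain ⟨a, ha⟩ := F.Dne w
      have h1 := H (Function.update σ x a)
        (fun v hv => Function.update_of_ne hv _ _)
        (by rw [Function.update_self]; exact ha)
      refine truth_mono M A w _ σ (fun v hv => ?_) h1
      have hvx : v ≠ x := by rintro rfl; exact hx hv
      exact Function.update_of_ne hvx a σ
  | cbfF x A => intro M w σ H τ hτ hD v hv; exact H v hv τ hτ (F.Dmono hv hD)
  | mp A B _ _ ih1 ih2 => intro M w σ; exact ih1 M w σ (ih2 M w σ)
  | gen x A _ ih => intro M w σ τ hτ hD; exact ih M w τ
  | necF A _ ih => intro M w σ v hv; exact ih M v σ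
  | necP A _ ih => intro M w σ v hv; exact ih M v σ
end

section
/- For every formula A of L_T and every variable x, the Barcan formula for □_P, namely ∀x □_P A → □_P ∀x A, is provable in Q∘S4.t. -/
/-! ## Auxiliary lemmas for the Barcan formula proof -/

section S4tLemmas

open BForm

lemma s_refl (A : BForm) : S4t (A.impl A) :=
  S4t.mp _ _ (S4t.mp _ _ (S4t.ax2 A (A.impl A) A) (S4t.ax1 A (A.impl A))) (S4t.ax1 A A)

lemma s_trans {A B C : BForm} (hAB : S4t (A.impl B)) (hBC : S4t (B.impl C)) :
    S4t (A.impl C) :=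
  S4t.mp _ _ (S4t.mp _ _ (S4t.ax2 A B C) (S4t.mp _ _ (S4t.ax1 (B.impl C) A) hBC)) hAB

lemma s_postcomp (A : BForm) {B C : BForm} (h : S4t (B.impl C)) :
    S4t ((A.impl B).impl (A.impl C)) :=
  S4t.mp _ _ (S4t.ax2 A B C) (S4t.mp _ _ (S4t.ax1 (B.impl C) A) h)

lemma s_flip {A B C : BForm} (h : S4t (A.impl (B.impl C))) :
    S4t (B.impl (A.impl C)) :=
  s_trans (S4t.ax1 B A) (S4t.mp _ _ (S4t.ax2 A B C) h)

lemma s_precomp (C : BForm) {A B : BForm} (hAB : S4t (A.impl B)) :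
    S4t ((B.impl C).impl (A.impl C)) :=
  s_flip (s_trans hAB (s_flip (s_refl (B.impl C))))

lemma s_flipF (A B C : BForm) :
    S4t ((A.impl (B.impl C)).impl (B.impl (A.impl C))) :=
  s_trans (S4t.ax2 A B C) (s_precomp (A.impl C) (S4t.ax1 B A))

lemma s_transF (A B C : BForm) :
    S4t ((A.impl B).impl ((B.impl C).impl (A.impl C))) := by
  have h1 : S4t (B.impl ((B.impl C).impl C)) := s_flip (s_refl (B.impl C))
  exact s_trans (s_postcomp A h1) (s_flipF A (B.impl C) C)

lemma s_dni (A : BForm) : S4t (A.impl A.neg.neg) := s_flip (s_refl A.neg)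

lemma s_dne (A : BForm) : S4t (A.neg.neg.impl A) :=
  S4t.mp _ _ (S4t.ax3 A.neg.neg A) (s_dni A.neg)

/-- `□P q → □P ¬¬q`. -/
lemma s_chi (q : BForm) : S4t (q.boxP.impl q.neg.neg.boxP) :=
  S4t.mp _ _ (S4t.kP q q.neg.neg) (S4t.necP _ (s_dni q))

/-- The key tense-logic theorem: `□F(p → □P q) → (◇F p → q)`. -/
lemma s_theta (p q : BForm) :
    S4t (((p.impl q.boxP).boxF).impl (p.diaF.impl q)) := by
  set X := p.impl q.boxP with hX
  set Y := q.neg.neg.boxP.neg with hY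
  set Z := p.neg with hZ
  have u1 : S4t ((p.impl q.boxP).impl (p.impl q.neg.neg.boxP)) := s_postcomp p (s_chi q)
  have u2 : S4t ((p.impl q.neg.neg.boxP).impl (Y.impl Z)) :=
    s_transF p (q.neg.neg.boxP) .falsum
  have gamma : S4t (X.impl (Y.impl Z)) := s_trans u1 u2
  have d1 : S4t (X.boxF.impl (Y.boxF.impl Z.boxF)) :=
    s_trans (S4t.mp _ _ (S4t.kF X (Y.impl Z)) (S4t.necF _ gamma)) (S4t.kF Y Z)
  have t2 : S4t (q.neg.impl Y.boxF) := S4t.tense2 q.neg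
  have f3 : S4t (X.boxF.impl (q.neg.impl Z.boxF)) := s_flip (s_trans t2 (s_flip d1))
  have e1 : S4t ((q.neg.impl Z.boxF).impl (p.diaF.impl q.neg.neg)) :=
    s_transF q.neg (p.neg.boxF) .falsum
  have g2 : S4t ((p.diaF.impl q.neg.neg).impl (p.diaF.impl q)) :=
    s_postcomp p.diaF (s_dne q)
  exact s_trans (s_trans f3 e1) g2

end S4tLemmas

section TFormLemmas

lemma tsubst_self (x : ℕ) (A : TForm) : A.subst x x = A := by
  induction A with
  | falsum => rfl
  | atom p args =>
      simp only [TForm.subst, TForm.atom.injEq, true_and]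
      rw [show (fun v => if v = x then x else v) = id from funext fun v => by
        split <;> simp_all, List.map_id]
  | impl A B ihA ihB => simp [TForm.subst, ihA, ihB]
  | all z A ih => by_cases h : z = x <;> simp [TForm.subst, h, ih]
  | boxF A ih => simp [TForm.subst, ih]
  | boxP A ih => simp [TForm.subst, ih]

lemma tsubstOK_self (x : ℕ) (A : TForm) : A.substOK x x := by
  induction A with
  | falsum => trivial
  | atom p args => trivial
  | impl A B ihA ihB => exact ⟨ihA, ihB⟩
  | all z A ih =>
      by_cases h : z = x
      · exact Or.inl h
      · exact Or.inr ⟨fun hzx => absurd hzx h, ih⟩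
  | boxF A ih => exact ih
  | boxP A ih => exact ih

end TFormLemmas

section QLemmas

lemma q_trans {A B C : TForm} (hAB : QoS4t (A.impl B)) (hBC : QoS4t (B.impl C)) :
    QoS4t (A.impl C) := by
  have h := QoS4t.s4t _ (fun n => if n = 0 then A else if n = 1 then B else C)
    (s_transF (.var 0) (.var 1) (.var 2))
  simp only [BForm.tsubst] at h
  exact QoS4t.mp _ _ (QoS4t.mp _ _ h hAB) hBC

lemma q_theta (C A : TForm) :
    QoS4t (((C.impl A.boxP).boxF).impl ((TForm.diaF C).impl A)) := by
  have h := QoS4t.s4t _ (fun n => if n = 0 then C else A)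
    (s_theta (.var 0) (.var 1))
  simpa [BForm.tsubst, BForm.diaF, BForm.neg, TForm.diaF, TForm.neg] using h

lemma q_kP (A B : TForm) :
    QoS4t ((A.impl B).boxP.impl (A.boxP.impl B.boxP)) := by
  have h := QoS4t.s4t _ (fun n => if n = 0 then A else B)
    (S4t.kP (.var 0) (.var 1))
  simpa [BForm.tsubst] using h

lemma q_tense1 (A : TForm) : QoS4t (A.impl (TForm.diaF A).boxP) := by
  have h := QoS4t.s4t _ (fun _ => A) (S4t.tense1 (.var 0))
  simpa [BForm.tsubst, BForm.diaF, BForm.neg, TForm.diaF, TForm.neg] using h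

end QLemmas

/-- The Barcan formula for `□P`, namely `∀x □P A → □P ∀x A`, is provable in
Q∘S4.t for every formula `A` of `L_T` and every variable `x`. -/
theorem bfP_provable (A : TForm) (x : ℕ) :
    QoS4t ((TForm.all x (TForm.boxP A)).impl (TForm.boxP (TForm.all x A))) := by
  set C : TForm := TForm.all x A.boxP with hC
  -- (1)  ∀x (∀x □P A → □P A)   (UI° with y = x)
  have step1 : QoS4t (TForm.all x (C.impl A.boxP)) := by
    have h := QoS4t.ui x x A.boxP (tsubstOK_self x A.boxP)
    rwa [tsubst_self] at h
  -- (2)  ∀x □F(∀x □P A → □P A)   (nec_F + CBF_F)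
  have step2 : QoS4t (TForm.all x ((C.impl A.boxP).boxF)) :=
    QoS4t.mp _ _ (QoS4t.cbfF x (C.impl A.boxP)) (QoS4t.necF _ step1)
  -- (3)  ∀x (□F(∀x □P A → □P A) → (◇F ∀x □P A → A))
  have step3 : QoS4t (TForm.all x (((C.impl A.boxP).boxF).impl ((TForm.diaF C).impl A))) :=
    QoS4t.gen x _ (q_theta C A)
  -- (4)  ∀x (◇F ∀x □P A → A)
  have step4 : QoS4t (TForm.all x ((TForm.diaF C).impl A)) :=
    QoS4t.mp _ _ (QoS4t.mp _ _ (QoS4t.distrib x _ _) step3) step2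
  -- (5)  ∀x ◇F C → ∀x A
  have step5 : QoS4t ((TForm.all x (TForm.diaF C)).impl (TForm.all x A)) :=
    QoS4t.mp _ _ (QoS4t.distrib x _ _) step4
  -- (6)  ◇F C → ∀x ◇F C   (x not free in ◇F C)
  have step6 : QoS4t ((TForm.diaF C).impl (TForm.all x (TForm.diaF C))) := by
    apply QoS4t.vac
    simp [TForm.diaF, TForm.neg, TForm.freeVars, hC]
  -- (7)  ◇F C → ∀x A
  have step7 : QoS4t ((TForm.diaF C).impl (TForm.all x A)) := q_trans step6 step5
  -- (8)  □P ◇F C → □P ∀x A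
  have step8 : QoS4t (((TForm.diaF C).boxP).impl ((TForm.all x A).boxP)) :=
    QoS4t.mp _ _ (q_kP _ _) (QoS4t.necP _ step7)
  -- (9)  C → □P ◇F C   (tense axiom) and conclude
  exact q_trans (q_tense1 C) step8
end

section
/- Let A be a formula of the language L of intuitionistic predicate logic, M = (F, I) an IQC-model based on an IQC-frame F = (W, R, D), and w ∈ W. For each w-assignment σ: M ⊨_w^σ A (intuitionistic truth) if and only if M̄ ⊨_w^σ A^t (classical temporal truth in the associated Q∘S4.t-model M̄). -/
/-!
The translation `A^t` of every formula is persistent in any Q∘S4.t-model, since each clause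
of `(·)^t` is guarded by `□_F` or `◇_P` (or is built from persistent parts by `∧`, `∨`).
With persistence, the intuitionistic Kripke clauses are exactly the classical clauses read
through `□_F`; the one subtle case is `∃`, where a witness found at an earlier world `v R w`
is carried forward to `w` by persistence of `A^t` and monotonicity of the domains.
-/

namespace TModel

variable {F : TFrame} (M : TModel F)

section

variable (w : F.W) (σ : ℕ → F.U)

theorem truth_and (A B : TForm) : M.truth w σ (A.and B) ↔ M.truth w σ A ∧ M.truth w σ B := by
  simp only [TForm.and, TForm.neg, truth]
  tauto

theorem truth_or (A B : TForm) : M.truth w σ (A.or B) ↔ M.truth w σ A ∨ M.truth w σ B := by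
  simp only [TForm.or, TForm.neg, truth]
  tauto

theorem truth_diaP (A : TForm) : M.truth w σ A.diaP ↔ ∃ v, F.R v w ∧ M.truth v σ A := by
  simp only [TForm.diaP, TForm.neg, truth, imp_false, not_forall, not_not, exists_prop]

theorem truth_ex (x : ℕ) (A : TForm) :
    M.truth w σ (TForm.ex x A) ↔
      ∃ τ : ℕ → F.U, (∀ y, y ≠ x → τ y = σ y) ∧ τ x ∈ F.D w ∧ M.truth w τ A := by
  simp only [TForm.ex, TForm.neg, truth, imp_false, not_forall, not_not, exists_prop]

end

theorem truth_t_of_rel (A : IForm) {w v : F.W} {σ : ℕ → F.U} (hwv : F.R w v)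
    (h : M.truth w σ A.t) : M.truth v σ A.t := by
  induction A with
  | falsum => exact h
  | atom | impl | all => exact fun u hvu => h u (F.trans hwv hvu)
  | and A B ihA ihB =>
    rw [IForm.t, truth_and] at h ⊢
    exact ⟨ihA h.1, ihB h.2⟩
  | or A B ihA ihB =>
    rw [IForm.t, truth_or] at h ⊢
    exact h.imp ihA ihB
  | ex x A =>
    rw [IForm.t, truth_diaP] at h ⊢
    obtain ⟨u, huw, hu⟩ := h
    exact ⟨u, F.trans huw hwv, hu⟩

end TModel

theorem IFrame.mem_D_of_variant (F : IFrame) {w v : F.W} {σ τ : ℕ → F.α} {x : ℕ}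
    (hwv : F.R w v) (hσ : ∀ y, σ y ∈ F.D w) (hvar : ∀ y, y ≠ x → τ y = σ y)
    (hx : τ x ∈ F.D v) (y : ℕ) : τ y ∈ F.D v := by
  by_cases hy : y = x
  · exact hy ▸ hx
  · exact hvar y hy ▸ F.Dmono hwv (hσ y)

namespace IModel

variable {F : IFrame} (M : IModel F)

/-- The lift of `σ` to `F.bar.U` does not depend on the world witnessing membership (proof
irrelevance), and every `τ : ℕ → F.bar.U` is the lift of `Subtype.val ∘ τ` (structure eta);
the proofs below use both facts definitionally. -/
def TranslationAgrees (A : IForm) : Prop :=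
  ∀ (w : F.W) (σ : ℕ → F.α) (hσ : ∀ x, σ x ∈ F.D w),
    M.truth w σ A ↔ M.bar.truth w (fun x => ⟨σ x, w, hσ x⟩) A.t

namespace TranslationAgrees

variable {M}

theorem falsum : M.TranslationAgrees .falsum := fun _ _ _ => Iff.rfl

theorem atom (p : ℕ) (args : List ℕ) : M.TranslationAgrees (.atom p args) := by
  intro w σ _
  change M.I w p (args.map σ) ↔ ∀ v, F.R w v → M.I v p ((args.map _).map Subtype.val)
  rw [List.map_map]
  exact ⟨fun h v hwv => M.Imono p _ hwv h, fun h => h w (F.refl w)⟩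

theorem and {A B : IForm} (hA : M.TranslationAgrees A) (hB : M.TranslationAgrees B) :
    M.TranslationAgrees (.and A B) :=
  fun w σ hσ => (and_congr (hA w σ hσ) (hB w σ hσ)).trans (TModel.truth_and ..).symm

theorem or {A B : IForm} (hA : M.TranslationAgrees A) (hB : M.TranslationAgrees B) :
    M.TranslationAgrees (.or A B) :=
  fun w σ hσ => (or_congr (hA w σ hσ) (hB w σ hσ)).trans (TModel.truth_or ..).symm

theorem impl {A B : IForm} (hA : M.TranslationAgrees A) (hB : M.TranslationAgrees B) :
    M.TranslationAgrees (.impl A B) := by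
  intro w σ hσ
  refine forall₂_congr fun v hwv => ?_
  have hσv : ∀ x, σ x ∈ F.D v := fun x => F.Dmono hwv (hσ x)
  exact imp_congr (hA v σ hσv) (hB v σ hσv)

theorem all {A : IForm} (x : ℕ) (hA : M.TranslationAgrees A) :
    M.TranslationAgrees (.all x A) := by
  intro w σ hσ
  refine forall₂_congr fun v hwv => ⟨fun h τ' hvar hx => ?_, fun h τ hvar hx => ?_⟩
  · have hτ := F.mem_D_of_variant hwv hσ (τ := fun y => (τ' y).1)
      (fun y hy => congrArg Subtype.val (hvar y hy)) hx
    exact (hA v _ hτ).mp (h _ (fun y hy => congrArg Subtype.val (hvar y hy)) hx)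
  · have hτ := F.mem_D_of_variant hwv hσ hvar hx
    exact (hA v τ hτ).mpr (h _ (fun y hy => Subtype.ext (hvar y hy)) hx)

theorem ex {A : IForm} (x : ℕ) (hA : M.TranslationAgrees A) :
    M.TranslationAgrees (.ex x A) := by
  intro w σ hσ
  refine Iff.trans ?_ (TModel.truth_diaP ..).symm
  constructor
  · rintro ⟨τ, hvar, hx, hτA⟩
    have hτ := F.mem_D_of_variant (F.refl w) hσ hvar hx
    refine ⟨w, F.refl w, (TModel.truth_ex ..).mpr ?_⟩
    exact ⟨_, fun y hy => Subtype.ext (hvar y hy), hx, (hA w τ hτ).mp hτA⟩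
  · rintro ⟨v, hvw, hv⟩
    obtain ⟨τ', hvar, hx, hτA⟩ := (TModel.truth_ex ..).mp hv
    have hτ := F.mem_D_of_variant (F.refl w) hσ (τ := fun y => (τ' y).1)
      (fun y hy => congrArg Subtype.val (hvar y hy)) (F.Dmono hvw hx)
    exact ⟨_, fun y hy => congrArg Subtype.val (hvar y hy), hτ x,
      (hA w _ hτ).mpr (M.bar.truth_t_of_rel A hvw hτA)⟩

end TranslationAgrees

end IModel

/-- For an IQC-model `M`, a world `w`, and a `w`-assignment `σ`: intuitionistic
truth of `A` at `w` under `σ` coincides with classical temporal truth of `A^t`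
at `w` under `σ` in the associated Q∘S4.t-model `M̄`. -/
theorem iqc_truth_iff_bar_truth (F : IFrame) (M : IModel F) (A : IForm)
    (w : F.W) (σ : ℕ → F.α) (hσ : ∀ x, σ x ∈ F.D w) :
    M.truth w σ A ↔ M.bar.truth w (fun x => ⟨σ x, w, hσ x⟩) A.t := by
  suffices h : M.TranslationAgrees A from h w σ hσ
  induction A with
  | falsum => exact .falsum
  | atom p args => exact .atom p args
  | and A B ihA ihB => exact ihA.and ihB
  | or A B ihA ihB => exact ihA.or ihB
  | impl A B ihA ihB => exact ihA.impl ihB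
  | all x A ih => exact ih.all x
  | ex x A ih => exact ih.ex x
end
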